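/- arXiv:1701.03066 — 4 statements merged into one kernel-verified Lean document; each statement's English description precedes it below -/
import Mathlib

section
/- Let N ≥ 2 be an integer. Define recursively subsets D_W(m), D_U(m) of ℕ₀ × ℕ₀ by: D_W(0) = ∅; D_U(m) = {(0,0)} ∪ ({(p, q+1) : (p,q) ∈ D_W(m)} \ {(0,1)}); and D_W(m+1) = D_W(m) ∪ {(1,0)} ∪ {v₁ + ⋯ + v_n : 1 ≤ n ≤ N, each v_i ∈ D_U(m)}, where addition of pairs is componentwise. Then ⋃_{m ≥ 0} D_W(m) = {(0,0)} ∪ {(p,q) ∈ ℕ₀ × ℕ₀ : p ≥ 1 and N·p ≤ N + (N-1)·q}. -/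
/-- `D_U` built from a given `D_W`: adjoin `(0,0)` (polynomials), shift `q` by one
(applying `I_ρ`), and remove `(0,1)` (since `I_ρ(1) = 0`). -/
def DUstep (W : Set (ℕ × ℕ)) : Set (ℕ × ℕ) :=
  {((0 : ℕ), (0 : ℕ))} ∪
    (((fun v : ℕ × ℕ => (v.1, v.2 + 1)) '' W) \ {((0 : ℕ), (1 : ℕ))})

/-- The lattice recursion `D_W(m)` for the index pairs `(p,q)` (number of noises `Ξ`,
number of integrations `I_ρ`) of the model-space recursion with nonlinearity degree
`N`: `D_W(0) = ∅` and `D_W(m+1) = D_W(m) ∪ {(1,0)} ∪ {v₁ + ⋯ + v_n : 1 ≤ n ≤ N,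
vᵢ ∈ D_U(m)}` where `D_U(m) = DUstep (D_W(m))`. -/
def DW (N : ℕ) : ℕ → Set (ℕ × ℕ)
  | 0 => ∅
  | m + 1 =>
      DW N m ∪ {((1 : ℕ), (0 : ℕ))} ∪
        {v | ∃ n : ℕ, 1 ≤ n ∧ n ≤ N ∧
          ∃ f : Fin n → ℕ × ℕ, (∀ i, f i ∈ DUstep (DW N m)) ∧ v = ∑ i, f i}

/-- The set `D_U(m)` of index pairs of the solution-side recursion. -/
def DU (N : ℕ) (m : ℕ) : Set (ℕ × ℕ) := DUstep (DW N m)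

lemma DW_succ_def (N m : ℕ) : DW N (m+1) =
    DW N m ∪ {((1 : ℕ), (0 : ℕ))} ∪
      {v | ∃ n : ℕ, 1 ≤ n ∧ n ≤ N ∧
        ∃ f : Fin n → ℕ × ℕ, (∀ i, f i ∈ DUstep (DW N m)) ∧ v = ∑ i, f i} := rfl

lemma DW_mono (N : ℕ) {m m' : ℕ} (h : m ≤ m') : DW N m ⊆ DW N m' := by
  induction m', h using Nat.le_induction with
  | base => exact subset_rfl
  | succ m' hm ih =>
      refine ih.trans ?_
      rw [DW_succ_def]
      exact Set.subset_union_left.trans Set.subset_union_left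

lemma sum_mem_DW (N m n : ℕ) (h1 : 1 ≤ n) (h2 : n ≤ N) (f : Fin n → ℕ × ℕ)
    (hf : ∀ i, f i ∈ DUstep (DW N m)) {v : ℕ × ℕ} (hv : v = ∑ i, f i) :
    v ∈ DW N (m+1) := by
  rw [DW_succ_def]
  exact Set.mem_union_right _ ⟨n, h1, h2, f, hf, hv⟩

lemma mem_DUstep_shift {W : Set (ℕ × ℕ)} {a b : ℕ} (h : (a, b) ∈ W) (ha : 1 ≤ a) :
    ((a, b+1) : ℕ × ℕ) ∈ DUstep W := by
  refine Set.mem_union_right _ ⟨⟨(a, b), h, rfl⟩, ?_⟩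
  simp only [Set.mem_singleton_iff, Prod.mk.injEq, not_and]
  intro h0; omega

lemma one_zero_mem_DW (N : ℕ) : ((1 : ℕ), (0 : ℕ)) ∈ DW N 1 := by
  rw [DW_succ_def]
  exact Set.mem_union_left _ (Set.mem_union_right _ rfl)

lemma zero_zero_mem_DW (N : ℕ) (hN : 1 ≤ N) : ((0 : ℕ), (0 : ℕ)) ∈ DW N 1 := by
  refine sum_mem_DW N 0 1 le_rfl hN (fun _ => ((0 : ℕ), (0 : ℕ)))
    (fun _ => Set.mem_union_left _ rfl) ?_
  simp

lemma DUstep_bound (N : ℕ) (hN : 2 ≤ N) {m : ℕ}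
    (IH : DW N m ⊆ ({((0 : ℕ), (0 : ℕ))} : Set (ℕ × ℕ)) ∪
      {pq : ℕ × ℕ | 1 ≤ pq.1 ∧ N * pq.1 ≤ N + (N - 1) * pq.2})
    {v : ℕ × ℕ} (hv : v ∈ DUstep (DW N m)) :
    N * v.1 ≤ 1 + (N - 1) * v.2 ∧ (v.1 = 0 → v.2 = 0) := by
  rcases hv with hv | ⟨⟨w, hw, rfl⟩, hne⟩
  · rw [Set.mem_singleton_iff] at hv; subst hv; simp
  · rcases IH hw with h0 | ⟨h1, h2⟩
    · exfalso
      rw [Set.mem_singleton_iff] at h0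
      apply hne
      rw [h0]
      rfl
    · constructor
      · have e : (N - 1) * (w.2 + 1) = (N - 1) * w.2 + (N - 1) := by ring
        have hN1 : N - 1 + 1 = N := by omega
        simp only [e]
        linarith [h2]
      · intro h; simp at h; omega

lemma DW_subset (N : ℕ) (hN : 2 ≤ N) (m : ℕ) :
    DW N m ⊆ ({((0 : ℕ), (0 : ℕ))} : Set (ℕ × ℕ)) ∪
      {pq : ℕ × ℕ | 1 ≤ pq.1 ∧ N * pq.1 ≤ N + (N - 1) * pq.2} := by
  induction m with
  | zero => intro v hv; exact absurd hv (Set.notMem_empty v)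
  | succ m IH =>
      intro v hv
      rw [DW_succ_def] at hv
      rcases hv with (hv | hv) | ⟨n, hn1, hnN, f, hf, rfl⟩
      · exact IH hv
      · rw [Set.mem_singleton_iff] at hv; subst hv
        right
        exact ⟨le_rfl, by simp⟩
      · have key := fun i => DUstep_bound N hN IH (hf i)
        by_cases h0 : (∑ i, f i).1 = 0
        · left
          rw [Prod.fst_sum] at h0
          have h1 : ∀ i ∈ Finset.univ, (f i).1 = 0 := Finset.sum_eq_zero_iff.mp h0
          have h2 : ∀ i : Fin n, f i = (0, 0) := fun i =>
            Prod.ext (h1 i (Finset.mem_univ i)) ((key i).2 (h1 i (Finset.mem_univ i)))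
          simp [h2]
        · right
          refine ⟨Nat.one_le_iff_ne_zero.mpr h0, ?_⟩
          rw [Prod.fst_sum, Prod.snd_sum, Finset.mul_sum, Finset.mul_sum]
          calc ∑ i, N * (f i).1 ≤ ∑ i : Fin n, (1 + (N - 1) * (f i).2) :=
                Finset.sum_le_sum fun i _ => (key i).1
            _ = n + ∑ i, (N - 1) * (f i).2 := by
                rw [Finset.sum_add_distrib]; simp
            _ ≤ N + ∑ i, (N - 1) * (f i).2 := by omega

lemma backward (N : ℕ) (hN : 2 ≤ N) : ∀ q p : ℕ, 1 ≤ p → N * p ≤ N + (N - 1) * q →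
    (p, q) ∈ DW N (q + 1) := by
  intro q
  induction q using Nat.strong_induction_on with
  | _ q IH =>
    intro p hp hle
    obtain ⟨a, ha, hNa⟩ : ∃ a, N = a + 1 ∧ 1 ≤ a := ⟨N - 1, by omega, by omega⟩
    have hsub : N - 1 = a := by omega
    rw [hsub] at hle
    rcases Nat.lt_or_ge p 2 with hp2 | hp2
    · have hp1 : p = 1 := by omega
      subst hp1
      rcases Nat.eq_zero_or_pos q with hq | hq
      · subst hq
        exact one_zero_mem_DW N
      · have hchild : ((1 : ℕ), q - 1) ∈ DW N q := by
          have := IH (q - 1) (by omega) 1 le_rfl (by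
            have : (N - 1) * (q - 1) + 0 * 0 = (N - 1) * (q - 1) := by ring
            omega)
          rwa [Nat.sub_add_cancel hq] at this
        have hd : ((1 : ℕ), q) ∈ DUstep (DW N q) := by
          have := mem_DUstep_shift hchild le_rfl
          rwa [Nat.sub_add_cancel hq] at this
        refine sum_mem_DW N q 1 le_rfl (by omega) (fun _ => ((1 : ℕ), q))
          (fun _ => hd) ?_
        simp
    · -- p ≥ 2
      set k := min p N with hkdef
      have hk2 : 2 ≤ k := le_min hp2 hN
      have hkp : k ≤ p := min_le_left _ _
      have hkN : k ≤ N := min_le_right _ _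
      have hkq : k ≤ q := by
        by_contra hcon
        push_neg at hcon
        have hq1 : q + 1 ≤ p := by omega
        have hmul : a * (q + 1) ≤ a * p := Nat.mul_le_mul_left a hq1
        rw [ha] at hle
        nlinarith [hle, hmul]
      have hkey : N * p ≤ (N - 1) * q + k := by
        rcases le_total p N with h | h
        · have hk : k = p := min_eq_left h
          rw [hk, hsub, ha]
          have : a * p ≤ a * q := Nat.mul_le_mul_left a (by omega)
          nlinarith [this]
        · have hk : k = N := min_eq_right h
          rw [hk, hsub]; omega
      obtain ⟨p1, hp1l, hp1⟩ : ∃ p1, 1 ≤ p1 ∧ p = p1 + (k - 1) :=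
        ⟨p - k + 1, by omega, by omega⟩
      obtain ⟨q1, hq1⟩ : ∃ q1, q = q1 + k := ⟨q - k, by omega⟩
      obtain ⟨k', hk'⟩ : ∃ k', k = k' + 2 := ⟨k - 2, by omega⟩
      have hchildineq : N * p1 ≤ N + (N - 1) * q1 := by
        rw [hsub] at hkey ⊢
        rw [hp1, hq1, ha] at hkey
        have e1 : (a + 1) * (p1 + (k - 1)) = (a + 1) * p1 + (a + 1) * (k - 1) := by ring
        have e2 : a * (q1 + k) = a * q1 + a * k := by ring
        have e3 : (a + 1) * (k - 1) + (a + 1) = (a + 1) * k := by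
          rw [hk', show k' + 2 - 1 = k' + 1 from rfl]; ring
        have e4 : (a + 1) * k = a * k + k := by ring
        rw [e1, e2] at hkey
        rw [ha]
        omega
      have hq1lt : q1 < q := by omega
      have hchild : (p1, q1) ∈ DW N q :=
        DW_mono N (by omega : q1 + 1 ≤ q) (IH q1 hq1lt p1 hp1l hchildineq)
      have h10 : ((1 : ℕ), (0 : ℕ)) ∈ DW N q :=
        DW_mono N (by omega : 1 ≤ q) (one_zero_mem_DW N)
      set f : Fin (k' + 2) → ℕ × ℕ :=
        fun i => if i = 0 then (p1, q1 + 1) else (1, 1) with hfdef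
      have hfmem : ∀ i, f i ∈ DUstep (DW N q) := by
        intro i
        by_cases hi : i = 0
        · rw [hfdef]; simp only [hi, if_pos]
          exact mem_DUstep_shift hchild hp1l
        · rw [hfdef]; simp only [if_neg hi]
          exact mem_DUstep_shift h10 le_rfl
      have hsum : ((p, q) : ℕ × ℕ) = ∑ i, f i := by
        rw [Fin.sum_univ_succ]
        have hne : ∀ i : Fin (k' + 1), f i.succ = (1, 1) :=
          fun i => if_neg (Fin.succ_ne_zero i)
        rw [Finset.sum_congr rfl (fun i _ => hne i)]
        rw [Finset.sum_const, Finset.card_univ, Fintype.card_fin]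
        have : f 0 = (p1, q1 + 1) := if_pos rfl
        rw [this]
        ext
        · simp [Prod.ext_iff]; omega
        · simp [Prod.ext_iff]; omega
      have := sum_mem_DW N q (k' + 2) (by omega) (by omega) f hfmem hsum
      exact DW_mono N (by omega : q + 1 ≤ q + 1) this

/-- The index pairs `(p,q)` with trivial polynomial part occurring in the model space
are exactly `{(0,0)} ∪ {(p,q) : p ≥ 1, Np ≤ N + (N-1)q}`. -/
theorem iUnion_DW_eq (N : ℕ) (hN : 2 ≤ N) :
    (⋃ m : ℕ, DW N m) =
      ({((0 : ℕ), (0 : ℕ))} : Set (ℕ × ℕ)) ∪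
        {pq : ℕ × ℕ | 1 ≤ pq.1 ∧ N * pq.1 ≤ N + (N - 1) * pq.2} := by
  ext v
  simp only [Set.mem_iUnion]
  constructor
  · rintro ⟨m, hm⟩
    exact DW_subset N hN m hm
  · rintro (h | ⟨h1, h2⟩)
    · rw [Set.mem_singleton_iff] at h; subst h
      exact ⟨1, zero_zero_mem_DW N (by omega)⟩
    · exact ⟨v.2 + 1, by have := backward N hN v.2 v.1 h1 h2; simpa using this⟩
end

section
/- Let N ≥ 2, d ≥ 1 be integers, ρ_c := d·(N-1)/(N+1), and ρ_c < ρ ≤ 2. Then there exists κ₀ > 0 such that for every κ ∈ (0,κ₀), setting α₀ := -(ρ+d)/2 - κ, the number h⁰ := card{(p,q) ∈ ℕ × ℕ₀ : N·p ≤ N + (N-1)·q and p·α₀ + q·ρ < 0} of lattice points of the cone with negative homogeneity satisfies ((ρ+d)/(N+1))·(ρ - ρ_c)^{-1} ≤ h⁰ ≤ 1 + ((ρ+d)·N/(N+1))·(ρ - ρ_c)^{-1}. -/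
/-!
Write `N = n + 1`, `p = j + 1` and `A = (ρ + d) / (2ρ)`. The sets of negative-homogeneous pairs
are monotone in `κ` and finite, so for small `κ` they equal their intersection, the lattice
points `(j, q)` of the triangle `(n + 1) j ≤ n q`, `q ≤ (j + 1) A`; it is bounded because
`D := n + 1 - n A` is positive, which is exactly `ρ > ρ_c`. Row `j` holds
`⌊(j + 1) A⌋ + 1 - ⌈(n + 1) j / n⌉` points, and the sum of the ceilings over `j ≤ m n + r`
(`r ≤ n`) is an explicit quadratic. Summing the rows up to the apex `j + 1 ≤ (n + 1) / D` gives
`h⁰ ≤ 1 + (n + 1) A / D`; summing them up to a block start `j = m n`, with `m` the integer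
nearest to the vertex of the resulting quadratic in `m`, gives `A / D ≤ h⁰`. In terms of `ρ`,
`A / D = (ρ + d) / (N + 1) · (ρ - ρ_c)⁻¹`.
-/

/-- The set of lattice points `(p,q)` of the cone `{p ≥ 1, Np ≤ N + (N-1)q}`
carrying negative homogeneity `p α₀ + q ρ < 0`, with `α₀ = -(ρ+d)/2 - κ`. -/
def negHomogPairs (N d : ℕ) (ρ κ : ℝ) : Set (ℕ × ℕ) :=
  {pq | 1 ≤ pq.1 ∧ N * pq.1 ≤ N + (N - 1) * pq.2 ∧
    (pq.1 : ℝ) * (-(ρ + (d : ℝ)) / 2 - κ) + (pq.2 : ℝ) * ρ < 0}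

open Set Filter Topology

theorem Monotone.eventually_nhdsGT_eq_biInter {α β : Type*} [TopologicalSpace β] [LinearOrder β]
    [OrderTopology β] {S : β → Set α} (hS : Monotone S) {a b : β} (hab : a < b)
    (hfin : (S b).Finite) : ∀ᶠ x in 𝓝[>] a, S x = ⋂ y ∈ Ioi a, S y := by
  have hleave : ∀ z ∈ S b \ ⋂ y ∈ Ioi a, S y, ∀ᶠ x in 𝓝[>] a, z ∉ S x := by
    intro z hz
    obtain ⟨y, hay, hzy⟩ : ∃ y ∈ Ioi a, z ∉ S y := by simpa using hz.2
    filter_upwards [Ioo_mem_nhdsGT hay] with x hx using fun hzx => hzy (hS hx.2.le hzx)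
  filter_upwards [hfin.sdiff.eventually_all.2 hleave, Ioo_mem_nhdsGT hab] with x hx hxb
  refine Subset.antisymm (fun z hz => ?_) (biInter_subset_of_mem hxb.1)
  by_contra hz'
  exact hx z ⟨hS hxb.2.le hz, hz'⟩ hz

theorem Nat.mul_ceilDiv_lt_add {n : ℕ} (hn : 0 < n) (a : ℕ) : n * (a ⌈/⌉ n) < a + n := by
  rw [ceilDiv_eq_add_pred_div, mul_comm]
  exact (Nat.div_mul_le_self _ _).trans_lt (by omega)

/- `(j, q)` stands for the pair `(j + 1, q)` of `negHomogPairs (n + 1) d ρ κ` in the limit `κ → 0`,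
with slope `A = (ρ + d) / (2ρ)`. -/
def conePairs (n : ℕ) (A : ℝ) : Set (ℕ × ℕ) :=
  {jq | (n + 1) * jq.1 ≤ n * jq.2 ∧ (jq.2 : ℝ) ≤ (jq.1 + 1) * A}

noncomputable def coneRows (n : ℕ) (A : ℝ) (K : ℕ) : Finset (ℕ × ℕ) :=
  (Finset.range K).biUnion fun j => {j} ×ˢ Finset.Icc ((n + 1) * j ⌈/⌉ n) ⌊(j + 1) * A⌋₊

section Cone
variable {n : ℕ} {A : ℝ}

theorem mem_conePairs_iff (hn : 0 < n) (hA : 0 ≤ A) {j q : ℕ} :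
    (j, q) ∈ conePairs n A ↔ (n + 1) * j ⌈/⌉ n ≤ q ∧ q ≤ ⌊(j + 1) * A⌋₊ := by
  rw [ceilDiv_le_iff_le_mul hn, Nat.le_floor_iff (by positivity)]
  rfl

theorem coe_coneRows (hn : 0 < n) (hA : 0 ≤ A) (K : ℕ) :
    (coneRows n A K : Set (ℕ × ℕ)) = conePairs n A ∩ {jq | jq.1 < K} := by
  ext ⟨j, q⟩
  simp [coneRows, mem_conePairs_iff hn hA]

theorem card_coneRows (K : ℕ) :
    (coneRows n A K).card
      = ∑ j ∈ Finset.range K, (⌊(j + 1) * A⌋₊ + 1 - (n + 1) * j ⌈/⌉ n) := by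
  rw [coneRows, Finset.card_biUnion]
  · simp
  · intro i _ j _ hij
    rw [Function.onFun, Finset.disjoint_left]
    rintro ⟨a, b⟩ ha hb
    simp only [Finset.mem_product, Finset.mem_singleton] at ha hb
    exact hij (ha.1.symm.trans hb.1)

theorem succ_mul_le_of_mem_conePairs {j q : ℕ} (h : (j, q) ∈ conePairs n A) :
    ((j : ℝ) + 1) * (n + 1 - n * A) ≤ n + 1 := by
  obtain ⟨hcone, hq⟩ := h
  have hcone' : ((n : ℝ) + 1) * j ≤ n * q := by exact_mod_cast hcone
  nlinarith [mul_le_mul_of_nonneg_left hq (Nat.cast_nonneg (α := ℝ) n)]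

theorem conePairs_eq_coneRows (hn : 0 < n) (hA : 0 ≤ A) (hD : n * A < n + 1) :
    conePairs n A = coneRows n A ⌊(n + 1) / (n + 1 - n * A)⌋₊ := by
  rw [coe_coneRows hn hA, eq_comm, inter_eq_left]
  intro jq hjq
  show jq.1 < _
  rw [Nat.lt_iff_add_one_le, Nat.le_floor_iff (by positivity), le_div_iff₀ (by linarith)]
  exact_mod_cast succ_mul_le_of_mem_conePairs hjq

theorem conePairs_finite (hn : 0 < n) (hA : 0 ≤ A) (hD : n * A < n + 1) :
    (conePairs n A).Finite := by
  rw [conePairs_eq_coneRows hn hA hD]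
  exact Finset.finite_toSet _

theorem sum_sub_le_card_conePairs (hn : 0 < n) (hA : 0 ≤ A) (hD : n * A < n + 1) (K : ℕ) :
    ∑ j ∈ Finset.range K, (((j : ℝ) + 1) * A - ((n + 1) * j ⌈/⌉ n : ℕ))
      ≤ Nat.card (conePairs n A) := by
  calc _ ≤ ((coneRows n A K).card : ℝ) := by
        rw [card_coneRows, Nat.cast_sum]
        refine Finset.sum_le_sum fun j _ => ?_
        have hsub := le_tsub_add (b := ⌊(j + 1) * A⌋₊ + 1) (a := (n + 1) * j ⌈/⌉ n)
        have hfloor := Nat.lt_floor_add_one (((j : ℝ) + 1) * A)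
        have : ((⌊(j + 1) * A⌋₊ + 1 : ℕ) : ℝ)
            ≤ ((⌊(j + 1) * A⌋₊ + 1 - (n + 1) * j ⌈/⌉ n : ℕ) : ℝ) + ((n + 1) * j ⌈/⌉ n : ℕ) := by
          exact_mod_cast hsub
        push_cast at this
        linarith
    _ ≤ Nat.card (conePairs n A) := by
        have := Nat.card_mono (conePairs_finite hn hA hD) (inter_subset_left (t := {jq | jq.1 < K}))
        rw [← coe_coneRows hn hA, Nat.card_coe_set_eq, ncard_coe_finset] at this
        exact_mod_cast this

theorem card_conePairs_le_sum (hn : 0 < n) (hA : 0 ≤ A) (hD : n * A < n + 1) :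
    (Nat.card (conePairs n A) : ℝ) ≤ ∑ j ∈ Finset.range ⌊(n + 1) / (n + 1 - n * A)⌋₊,
      (((j : ℝ) + 1) * A + 1 - ((n + 1) * j ⌈/⌉ n : ℕ)) := by
  rw [conePairs_eq_coneRows hn hA hD, Nat.card_coe_set_eq, ncard_coe_finset, card_coneRows,
    Nat.cast_sum]
  refine Finset.sum_le_sum fun j hj => ?_
  set c := (n + 1) * j ⌈/⌉ n
  have hjD : ((j : ℝ) + 1) * (n + 1 - n * A) ≤ n + 1 := by
    have hD' : 0 < (n : ℝ) + 1 - n * A := by linarith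
    have := (Nat.le_floor_iff (by positivity)).1 (Finset.mem_range.1 hj)
    push_cast at this
    rwa [le_div_iff₀ hD'] at this
  have hc : (n : ℝ) * c < (n + 1) * j + n := by
    exact_mod_cast Nat.mul_ceilDiv_lt_add hn ((n + 1) * j)
  have hc' : (c : ℝ) ≤ (j + 1) * A + 1 := by
    have hn' : (0 : ℝ) < n := by exact_mod_cast hn
    nlinarith
  rcases le_total c (⌊(j + 1) * A⌋₊ + 1) with h | h
  · rw [Nat.cast_sub h]
    push_cast
    linarith [Nat.floor_le (by positivity : (0 : ℝ) ≤ (j + 1) * A)]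
  · rw [Nat.sub_eq_zero_of_le h, Nat.cast_zero]
    linarith

end Cone

section CeilSum
variable {n : ℕ}

theorem succ_mul_ceilDiv_of_lt (hn : 0 < n) (m : ℕ) {i : ℕ} (hi : i < n) :
    (n + 1) * (m * n + i + 1) ⌈/⌉ n = m * n + i + 1 + (m + 1) := by
  refine le_antisymm ((ceilDiv_le_iff_le_mul hn).2 (by nlinarith)) (not_lt.1 fun h => ?_)
  have := (ceilDiv_le_iff_le_mul hn).1
    (show (n + 1) * (m * n + i + 1) ⌈/⌉ n ≤ m * n + i + 1 + m by omega)
  nlinarith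

theorem two_mul_sum_ceilDiv_of_block_start (hn : 0 < n) (m : ℕ)
    (h₀ : 2 * ∑ j ∈ Finset.range (m * n + 1), (n + 1) * j ⌈/⌉ n
      = m * n * (m * n + 1) + n * m * (m + 1)) {r : ℕ} (hr : r ≤ n) :
    2 * ∑ j ∈ Finset.range (m * n + r + 1), (n + 1) * j ⌈/⌉ n
      = (m * n + r) * (m * n + r + 1) + n * m * (m + 1) + 2 * r * (m + 1) := by
  induction r with
  | zero => simpa using h₀
  | succ r ih =>
    rw [← add_assoc, Finset.sum_range_succ, mul_add, ih (by omega),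
      succ_mul_ceilDiv_of_lt hn m (by omega)]
    ring

theorem two_mul_sum_ceilDiv (hn : 0 < n) (m : ℕ) {r : ℕ} (hr : r ≤ n) :
    2 * ∑ j ∈ Finset.range (m * n + r + 1), (n + 1) * j ⌈/⌉ n
      = (m * n + r) * (m * n + r + 1) + n * m * (m + 1) + 2 * r * (m + 1) := by
  refine two_mul_sum_ceilDiv_of_block_start hn m ?_ hr
  induction m with
  | zero => simp
  | succ m ih =>
    rw [show (m + 1) * n + 1 = m * n + n + 1 by ring,
      two_mul_sum_ceilDiv_of_block_start hn m ih le_rfl]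
    ring

theorem le_two_mul_sum_ceilDiv (hn : 0 < n) (J : ℕ) :
    (n + 1) * J ^ 2 + 2 * n * J ≤ n * (2 * ∑ j ∈ Finset.range (J + 1), (n + 1) * j ⌈/⌉ n) := by
  obtain ⟨m, r, hr, rfl⟩ : ∃ m r, r < n ∧ J = m * n + r :=
    ⟨J / n, J % n, Nat.mod_lt J hn, (Nat.div_add_mod' J n).symm⟩
  rw [two_mul_sum_ceilDiv hn m hr.le]
  obtain ⟨t, rfl⟩ := Nat.exists_eq_add_of_le hr.le
  -- the defect `r * (n - r)` vanishes exactly at the block starts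
  have key : (r + t) * ((m * (r + t) + r) * (m * (r + t) + r + 1) + (r + t) * m * (m + 1)
      + 2 * r * (m + 1)) = (r + t + 1) * (m * (r + t) + r) ^ 2 + 2 * (r + t) * (m * (r + t) + r)
        + r * t := by ring
  rw [key]
  exact Nat.le_add_right _ _

end CeilSum

section Arith
variable {n A : ℝ}

theorem exists_nat_div_le_quadratic (hn : 1 ≤ n) (hA : 0 ≤ A) (hD : n * A < n + 1) :
    ∃ m : ℕ, A / (n + 1 - n * A) ≤
      A * (m * n + 1) * (m * n + 2) / 2 - (m * n * (m * n + 1) + n * m * (m + 1)) / 2 := by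
  have hD' : 0 < n + 1 - n * A := by linarith
  rcases le_or_gt A 1 with hA1 | hA1
  · refine ⟨0, ?_⟩
    rw [div_le_iff₀ hD']
    norm_num
    nlinarith [mul_nonneg hA (mul_nonneg (by linarith : (0 : ℝ) ≤ n) (sub_nonneg.2 hA1))]
  -- round the vertex `(3A - 2) / (2D)` of the quadratic in `m` to the nearest integer
  set y := (3 * A - 2) / (2 * (n + 1 - n * A)) with hy
  have hy0 : 0 ≤ y := by rw [hy]; apply div_nonneg <;> linarith
  refine ⟨⌊y + 1 / 2⌋₊, ?_⟩
  set m : ℕ := ⌊y + 1 / 2⌋₊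
  have hm₁ : (m : ℝ) ≤ y + 1 / 2 := Nat.floor_le (by linarith)
  have hm₂ : y + 1 / 2 < m + 1 := Nat.lt_floor_add_one _
  have hvertex : (2 * (n + 1 - n * A) * m - 3 * A + 2) ^ 2 ≤ (n + 1 - n * A) ^ 2 := by
    have h2y : 2 * (n + 1 - n * A) * y = 3 * A - 2 := by rw [hy]; field_simp
    apply sq_le_sq' <;> nlinarith
  have hid : 8 * (n + 1 - n * A) * (A * (m * n + 1) * (m * n + 2) / 2
      - (m * n * (m * n + 1) + n * m * (m + 1)) / 2) - 8 * A
      = n * ((n + 1 - n * A) ^ 2 - (2 * (n + 1 - n * A) * m - 3 * A + 2) ^ 2)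
        + n * (n - 1) * (A - 1) * (2 - (n + 1) * (A - 1)) := by ring
  rw [div_le_iff₀ hD']
  have hcorr : 0 ≤ n * (n - 1) * (A - 1) * (2 - (n + 1) * (A - 1)) := by
    apply mul_nonneg (mul_nonneg (mul_nonneg (by linarith) (by linarith)) (by linarith))
    nlinarith
  nlinarith [mul_nonneg (by linarith : (0 : ℝ) ≤ n) (sub_nonneg.2 hvertex)]

theorem quadratic_le_one_add_div (hn : 0 < n) (hA : 0 ≤ A) (hD : n * A < n + 1) {J S : ℝ}
    (hJ : (J + 1) * (n + 1 - n * A) ≤ n + 1) (hS : (n + 1) * J ^ 2 + 2 * n * J ≤ n * (2 * S)) :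
    A * (J + 1) * (J + 1 + 1) / 2 + (J + 1) - S ≤ 1 + (n + 1) * A / (n + 1 - n * A) := by
  have hD' : 0 < n + 1 - n * A := by linarith
  set g := n + 1 - (J + 1) * (n + 1 - n * A)
  have hid : 1 + (n + 1) * A / (n + 1 - n * A)
      - (A * (J + 1) * (J + 1 + 1) / 2 + (J + 1) - ((n + 1) * J ^ 2 + 2 * n * J) / (2 * n))
      = g * (n * A + g) / (2 * n * (n + 1 - n * A)) := by
    field_simp
    ring
  have : 0 ≤ g * (n * A + g) / (2 * n * (n + 1 - n * A)) := by
    apply div_nonneg (mul_nonneg ?_ ?_) (by positivity) <;> nlinarith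
  have : ((n + 1) * J ^ 2 + 2 * n * J) / (2 * n) ≤ S := by
    rw [div_le_iff₀ (by positivity)]; linarith
  linarith

end Arith

theorem sum_range_succ_mul_sub (A : ℝ) (f : ℕ → ℝ) (K : ℕ) :
    ∑ j ∈ Finset.range K, (((j : ℝ) + 1) * A - f j)
      = A * K * (K + 1) / 2 - ∑ j ∈ Finset.range K, f j := by
  induction K with
  | zero => simp
  | succ K ih => rw [Finset.sum_range_succ, Finset.sum_range_succ, ih]; push_cast; ring

section Count
variable {n : ℕ} {A : ℝ}

theorem div_le_card_conePairs (hn : 0 < n) (hA : 0 ≤ A) (hD : n * A < n + 1) :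
    A / (n + 1 - n * A) ≤ Nat.card (conePairs n A) := by
  obtain ⟨m, hm⟩ := exists_nat_div_le_quadratic (by exact_mod_cast hn) hA hD
  have hsum := sum_sub_le_card_conePairs hn hA hD (m * n + 1)
  have hT : (2 * ∑ j ∈ Finset.range (m * n + 1), (n + 1) * j ⌈/⌉ n : ℕ)
      = m * n * (m * n + 1) + n * m * (m + 1) := by
    simpa using two_mul_sum_ceilDiv hn m (Nat.zero_le n)
  rw [sum_range_succ_mul_sub, ← Nat.cast_sum] at hsum
  have hT' := congrArg (Nat.cast : ℕ → ℝ) hT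
  push_cast at hsum hT' ⊢
  linarith

theorem card_conePairs_le_one_add_div (hn : 0 < n) (hA : 0 ≤ A) (hD : n * A < n + 1) :
    (Nat.card (conePairs n A) : ℝ) ≤ 1 + (n + 1) * A / (n + 1 - n * A) := by
  have hD' : 0 < (n : ℝ) + 1 - n * A := by linarith
  obtain ⟨J, hJ⟩ : ∃ J, ⌊(n + 1) / (n + 1 - n * A)⌋₊ = J + 1 := by
    refine Nat.exists_eq_add_one.2 (Nat.floor_pos.2 ?_)
    rw [one_le_div hD']
    nlinarith
  have hsum := card_conePairs_le_sum hn hA hD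
  have hJD : ((J : ℝ) + 1) * (n + 1 - n * A) ≤ n + 1 := by
    have := Nat.floor_le (by positivity : (0 : ℝ) ≤ (n + 1) / (n + 1 - n * A))
    rw [hJ, le_div_iff₀ hD'] at this
    exact_mod_cast this
  have hS : (((n + 1) * J ^ 2 + 2 * n * J : ℕ) : ℝ)
      ≤ ((n * (2 * ∑ j ∈ Finset.range (J + 1), (n + 1) * j ⌈/⌉ n) : ℕ) : ℝ) := by
    exact_mod_cast le_two_mul_sum_ceilDiv hn J
  have hrow : ∀ j ∈ Finset.range (J + 1), ((j : ℝ) + 1) * A + 1 - ((n + 1) * j ⌈/⌉ n : ℕ)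
      = (((j : ℝ) + 1) * A - ((n + 1) * j ⌈/⌉ n : ℕ)) + 1 := fun _ _ => by ring
  rw [hJ, Finset.sum_congr rfl hrow, Finset.sum_add_distrib, sum_range_succ_mul_sub,
    ← Nat.cast_sum] at hsum
  push_cast at hsum hS
  have := quadratic_le_one_add_div (by exact_mod_cast hn) hA hD hJD hS
  simp only [Finset.sum_const, Finset.card_range, nsmul_eq_mul, mul_one] at hsum
  push_cast at hsum
  linarith

end Count

theorem negHomogPairs_monotone (N d : ℕ) (ρ : ℝ) : Monotone (negHomogPairs N d ρ) := by
  intro κ κ' hκ pq ⟨hp, hcone, hneg⟩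
  refine ⟨hp, hcone, ?_⟩
  have : (1 : ℝ) ≤ pq.1 := by exact_mod_cast hp
  nlinarith

theorem negHomogPairs_subset_range (N d : ℕ) (ρ κ : ℝ) :
    negHomogPairs N d ρ κ ⊆ range (Prod.map (· + 1) id) := by
  rintro ⟨p, q⟩ ⟨hp, -⟩
  exact ⟨(p - 1, q), by simp only [Prod.map, id]; congr; omega⟩

section NegHomog
variable {n d : ℕ} {ρ κ : ℝ}

theorem mem_preimage_negHomogPairs_iff (hρ : 0 < ρ) {j q : ℕ} :
    (j, q) ∈ Prod.map (· + 1) id ⁻¹' negHomogPairs (n + 1) d ρ κ ↔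
      (n + 1) * j ≤ n * q ∧ (q : ℝ) < (j + 1) * ((ρ + d) / (2 * ρ) + κ / ρ) := by
  have hslope : ((j : ℝ) + 1) * ((ρ + d) / (2 * ρ) + κ / ρ) = (j + 1) * ((ρ + d) / 2 + κ) / ρ := by
    field_simp
  simp only [negHomogPairs, mem_preimage, Prod.map, id, mem_ofPred_eq, hslope, lt_div_iff₀ hρ,
    Nat.add_sub_cancel, mul_add, mul_one, add_comm (n + 1), Nat.add_le_add_iff_right]
  push_cast
  constructor
  · rintro ⟨-, hcone, hneg⟩; exact ⟨hcone, by linarith⟩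
  · rintro ⟨hcone, hneg⟩; exact ⟨trivial, hcone, by linarith⟩

theorem preimage_negHomogPairs_subset (hρ : 0 < ρ) :
    Prod.map (· + 1) id ⁻¹' negHomogPairs (n + 1) d ρ κ
      ⊆ conePairs n ((ρ + d) / (2 * ρ) + κ / ρ) := by
  rintro ⟨j, q⟩ h
  obtain ⟨hcone, hq⟩ := (mem_preimage_negHomogPairs_iff hρ).1 h
  exact ⟨hcone, hq.le⟩

theorem biInter_preimage_negHomogPairs (hρ : 0 < ρ) :
    ⋂ κ ∈ Ioi (0 : ℝ), Prod.map (· + 1) id ⁻¹' negHomogPairs (n + 1) d ρ κ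
      = conePairs n ((ρ + d) / (2 * ρ)) := by
  ext ⟨j, q⟩
  simp only [mem_iInter₂, mem_Ioi, mem_preimage_negHomogPairs_iff hρ]
  constructor
  · intro h
    refine ⟨(h 1 one_pos).1, le_of_forall_pos_lt_add fun ε hε => ?_⟩
    have hj : (0 : ℝ) < j + 1 := by positivity
    have := (h (ε * ρ / (j + 1)) (by positivity)).2
    rwa [mul_add, show ε * ρ / (j + 1) / ρ = ε / (j + 1) by field_simp, mul_div_cancel₀ _ hj.ne']
      at this
  · rintro ⟨hcone, hq⟩ κ hκ
    exact ⟨hcone, hq.trans_lt (by gcongr; linarith [div_pos hκ hρ])⟩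

theorem eventually_card_negHomogPairs_eq (hn : 0 < n) (hρ : 0 < ρ)
    (hD : n * ((ρ + d) / (2 * ρ)) < n + 1) :
    ∀ᶠ κ in 𝓝[>] 0, Nat.card (negHomogPairs (n + 1) d ρ κ)
      = Nat.card (conePairs n ((ρ + d) / (2 * ρ))) := by
  obtain ⟨κ₁, hκ₁, hslope⟩ := exists_pos_mul_lt (sub_pos.2 hD) (n / ρ)
  have hfin : (Prod.map (· + 1) id ⁻¹' negHomogPairs (n + 1) d ρ κ₁).Finite := by
    refine (conePairs_finite hn (by positivity) ?_).subset (preimage_negHomogPairs_subset hρ)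
    linarith [show (n : ℝ) * ((ρ + d) / (2 * ρ) + κ₁ / ρ) = n * ((ρ + d) / (2 * ρ)) + n / ρ * κ₁ by
      ring]
  have hmono : Monotone fun κ => Prod.map (· + 1) id ⁻¹' negHomogPairs (n + 1) d ρ κ :=
    fun _ _ h => preimage_mono (negHomogPairs_monotone _ _ _ h)
  filter_upwards [hmono.eventually_nhdsGT_eq_biInter hκ₁ hfin] with κ hκ
  rw [← Nat.card_preimage_of_injective (Nat.succ_injective.prodMap Function.injective_id)
    (negHomogPairs_subset_range _ _ _ _), hκ, biInter_preimage_negHomogPairs hρ]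

end NegHomog

theorem h0F_bounds_general (N d : ℕ) (hN : 2 ≤ N) (ρ : ℝ)
    (hρc : (d : ℝ) * ((N : ℝ) - 1) / ((N : ℝ) + 1) < ρ) :
    ∃ κ₀ > (0 : ℝ), ∀ κ : ℝ, 0 < κ → κ < κ₀ →
      (ρ + (d : ℝ)) / ((N : ℝ) + 1)
          * (ρ - (d : ℝ) * ((N : ℝ) - 1) / ((N : ℝ) + 1))⁻¹
        ≤ (Nat.card (negHomogPairs N d ρ κ) : ℝ)
      ∧ (Nat.card (negHomogPairs N d ρ κ) : ℝ)
        ≤ 1 + (ρ + (d : ℝ)) * (N : ℝ) / ((N : ℝ) + 1)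
            * (ρ - (d : ℝ) * ((N : ℝ) - 1) / ((N : ℝ) + 1))⁻¹ := by
  obtain ⟨n, rfl⟩ : ∃ n, N = n + 1 := ⟨N - 1, by omega⟩
  have hn : 0 < n := by omega
  push_cast at hρc ⊢
  rw [add_sub_cancel_right] at hρc ⊢
  have hρ : 0 < ρ := lt_of_le_of_lt (by positivity) hρc
  have hgap : (d : ℝ) * n < ρ * (n + 1 + 1) := by rwa [div_lt_iff₀ (by positivity)] at hρc
  have hD : n * ((ρ + d) / (2 * ρ)) < n + 1 := by
    rw [mul_div_assoc', div_lt_iff₀ (by positivity)]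
    linarith
  have hlow : (ρ + d) / (n + 1 + 1) * (ρ - d * n / (n + 1 + 1))⁻¹
      = (ρ + d) / (2 * ρ) / (n + 1 - n * ((ρ + d) / (2 * ρ))) := by
    field_simp
    ring
  have hup : (ρ + d) * (n + 1) / (n + 1 + 1) * (ρ - d * n / (n + 1 + 1))⁻¹
      = (n + 1) * ((ρ + d) / (2 * ρ)) / (n + 1 - n * ((ρ + d) / (2 * ρ))) := by
    field_simp
    ring
  obtain ⟨κ₀, hκ₀, hκ⟩ :=
    (nhdsGT_basis (0 : ℝ)).eventually_iff.1 (eventually_card_negHomogPairs_eq hn hρ hD)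
  refine ⟨κ₀, hκ₀, fun κ hκ0 hκκ₀ => ?_⟩
  rw [hκ ⟨hκ0, hκκ₀⟩, hlow, hup]
  exact ⟨div_le_card_conePairs hn (by positivity) hD,
    card_conePairs_le_one_add_div hn (by positivity) hD⟩

/-- Bounds for `h⁰_F(N,d,ρ)`, the number of negative-homogeneous index pairs:
for `ρ_c < ρ ≤ 2` and all sufficiently small `κ > 0`,
`(ρ+d)/(N+1) · (ρ-ρ_c)⁻¹ ≤ h⁰ ≤ 1 + (ρ+d)N/(N+1) · (ρ-ρ_c)⁻¹`,
where `ρ_c = d(N-1)/(N+1)`. -/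
theorem h0F_bounds (N d : ℕ) (hN : 2 ≤ N) (hd : 1 ≤ d) (ρ : ℝ)
    (hρc : (d : ℝ) * ((N : ℝ) - 1) / ((N : ℝ) + 1) < ρ) (hρ2 : ρ ≤ 2) :
    ∃ κ₀ > (0 : ℝ), ∀ κ : ℝ, 0 < κ → κ < κ₀ →
      (ρ + (d : ℝ)) / ((N : ℝ) + 1)
          * (ρ - (d : ℝ) * ((N : ℝ) - 1) / ((N : ℝ) + 1))⁻¹
        ≤ (Nat.card (negHomogPairs N d ρ κ) : ℝ)
      ∧ (Nat.card (negHomogPairs N d ρ κ) : ℝ)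
        ≤ 1 + (ρ + (d : ℝ)) * (N : ℝ) / ((N : ℝ) + 1)
            * (ρ - (d : ℝ) * ((N : ℝ) - 1) / ((N : ℝ) + 1))⁻¹ :=
  h0F_bounds_general N d hN ρ hρc
end

section
/- Let N ≥ 2, d ≥ 1 be integers, ρ_c := d·(N-1)/(N+1), ρ > ρ_c, and κ > 0 with 2κ·(N-1) < (N+1)·(ρ - ρ_c). Set α₀ := -(ρ+d)/2 - κ. Then for every integer q ≥ 1 there is at most one integer p ≥ 1 with N·p ≤ N + (N-1)·q and p·α₀ + q·ρ < 0; moreover, if such p exists, then p = 1 + ⌊(N-1)·q/N⌋. -/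
/-- For each number `q ≥ 1` of integration operators `I_ρ`, there is at most one
number `p` of noise symbols `Ξ` in the cone `{p ≥ 1, Np ≤ N + (N-1)q}` giving a
negative homogeneity `p α₀ + q ρ < 0` (with `α₀ = -(ρ+d)/2 - κ`); and if such `p`
exists, then `p = 1 + ⌊(N-1)q/N⌋`. -/
theorem unique_p_for_q (N d : ℕ) (hN : 2 ≤ N) (hd : 1 ≤ d) (ρ κ : ℝ)
    (hρ : (d : ℝ) * ((N : ℝ) - 1) / ((N : ℝ) + 1) < ρ) (hκ : 0 < κ)
    (hκ2 : 2 * κ * ((N : ℝ) - 1)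
      < ((N : ℝ) + 1) * (ρ - (d : ℝ) * ((N : ℝ) - 1) / ((N : ℝ) + 1))) :
    ∀ q : ℕ, 1 ≤ q →
      (∀ p₁ p₂ : ℕ,
        1 ≤ p₁ → N * p₁ ≤ N + (N - 1) * q →
          (p₁ : ℝ) * (-(ρ + (d : ℝ)) / 2 - κ) + (q : ℝ) * ρ < 0 →
        1 ≤ p₂ → N * p₂ ≤ N + (N - 1) * q →
          (p₂ : ℝ) * (-(ρ + (d : ℝ)) / 2 - κ) + (q : ℝ) * ρ < 0 →
        p₁ = p₂)
      ∧ (∀ p : ℕ,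
          1 ≤ p → N * p ≤ N + (N - 1) * q →
            (p : ℝ) * (-(ρ + (d : ℝ)) / 2 - κ) + (q : ℝ) * ρ < 0 →
          p = 1 + (N - 1) * q / N) := by
  intro q hq
  have hN1 : 1 ≤ N := le_trans (by norm_num) hN
  have hNpos : 0 < N := hN1
  have hNR : (2 : ℝ) ≤ (N : ℝ) := by exact_mod_cast hN
  have hdR : (1 : ℝ) ≤ (d : ℝ) := by exact_mod_cast hd
  have hqR : (1 : ℝ) ≤ (q : ℝ) := by exact_mod_cast hq
  have hne : ((N : ℝ) + 1) ≠ 0 := by positivity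
  have hb : 2 * κ * ((N : ℝ) - 1) < ((N : ℝ) + 1) * ρ - (d : ℝ) * ((N : ℝ) - 1) := by
    have hexp : ((N : ℝ) + 1) * (ρ - (d : ℝ) * ((N : ℝ) - 1) / ((N : ℝ) + 1))
        = ((N : ℝ) + 1) * ρ - (d : ℝ) * ((N : ℝ) - 1) := by
      field_simp
    linarith [hκ2, hexp.symm.le, hexp.le]
  have hρpos : 0 < ρ := by
    have h0 : 0 < (d : ℝ) * ((N : ℝ) - 1) / ((N : ℝ) + 1) := by
      apply div_pos
      · nlinarith
      · linarith
    linarith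
  have key : ∀ p : ℕ, 1 ≤ p → N * p ≤ N + (N - 1) * q →
      (p : ℝ) * (-(ρ + (d : ℝ)) / 2 - κ) + (q : ℝ) * ρ < 0 →
      p = 1 + (N - 1) * q / N := by
    intro p hp hcone hneg
    have hub : p ≤ 1 + (N - 1) * q / N := by
      have h1 : p ≤ (N + (N - 1) * q) / N :=
        (Nat.le_div_iff_mul_le hNpos).mpr (by rw [mul_comm] at hcone; omega)
      have h2 : (N + (N - 1) * q) / N = 1 + (N - 1) * q / N := by
        rw [add_comm N, Nat.add_div_right _ hNpos, add_comm]
      omega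
    have hlb : 1 + (N - 1) * q / N ≤ p := by
      by_contra h
      push_neg at h
      have h2 : N * p ≤ (N - 1) * q := by
        have h3 : p ≤ (N - 1) * q / N := by omega
        have h4 := (Nat.le_div_iff_mul_le hNpos).mp h3
        rw [mul_comm] at h4; omega
      have hcast : (N : ℝ) * p ≤ ((N : ℝ) - 1) * q := by
        have := (Nat.cast_le (α := ℝ)).mpr h2
        push_cast [Nat.cast_sub hN1] at this
        convert this using 2
      have hqpos : (0 : ℝ) < q := by linarith
      nlinarith [mul_le_mul_of_nonneg_right hcast (show (0 : ℝ) ≤ ρ + d + 2 * κ by linarith),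
        mul_lt_mul_of_pos_left hb hqpos,
        mul_lt_mul_of_pos_left hneg (show (0 : ℝ) < 2 * (N : ℝ) by linarith)]
    omega
  exact ⟨fun p₁ p₂ h1 h2 h3 h4 h5 h6 => (key p₁ h1 h2 h3).trans (key p₂ h4 h5 h6).symm, key⟩
end

section
/- Let N ≥ 3 and n ≥ 0 be integers, q := N·n, and let d₁, …, d_{N+1} be nonnegative integers satisfying Σ_{j=1}^{N+1} d_j = q + 1 and Σ_{j=1}^{N+1} j·d_j = 2·q. Then: (a) if d₁ = (N-1)·n + 1, then n ≥ 1, d_j = 0 for all 2 ≤ j ≤ N-1, d_N = 1 and d_{N+1} = n - 1; (b) there is no such solution with d₁ = (N-1)·n + 2. Moreover, (c) if instead q = N·n + r with 1 ≤ r ≤ N-1 and d₁ = (N-1)·n + r + 1, then r = 1, d_j = 0 for all 2 ≤ j ≤ N, and d_{N+1} = n. (Consequently, for N > 2 every bare tree of a negative-homogeneous element with q a multiple of N is a regular tree of degree N, and otherwise it is obtained from a regular tree of degree N by removing between 1 and N-1 edges.) -/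
private lemma sum_split_bot (M : ℕ) (hM : 1 ≤ M) (f : ℕ → ℕ) :
    ∑ j ∈ Finset.Icc 1 M, f j = f 1 + ∑ j ∈ Finset.Icc 2 M, f j := by
  have h : Finset.Icc 1 M = insert 1 (Finset.Icc 2 M) := by
    ext x
    simp only [Finset.mem_Icc, Finset.mem_insert]
    omega
  rw [h, Finset.sum_insert (by simp)]

private lemma sum_comb (M : ℕ) (d : ℕ → ℕ) :
    ∑ j ∈ Finset.Icc 2 M, (M - j) * d j + ∑ j ∈ Finset.Icc 2 M, j * d j
      = M * ∑ j ∈ Finset.Icc 2 M, d j := by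
  rw [Finset.mul_sum, ← Finset.sum_add_distrib]
  refine Finset.sum_congr rfl fun j hj => ?_
  have hjM : j ≤ M := (Finset.mem_Icc.mp hj).2
  rw [← Nat.add_mul, Nat.sub_add_cancel hjM]

/-- Degree vectors of bare trees for `N > 2`: let `d j` (for `1 ≤ j ≤ N+1`) be
nonnegative integers with `∑ d j = q + 1` and `∑ j · d j = 2q`.
For `q = Nn`: (a) if `d 1 = (N-1)n + 1` then `n ≥ 1`, `d j = 0` for
`2 ≤ j ≤ N-1`, `d N = 1` and `d (N+1) = n - 1`; (b) there is no solution with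
`d 1 = (N-1)n + 2`. (c) For `q = Nn + r` with `1 ≤ r ≤ N-1`: if
`d 1 = (N-1)n + r + 1` then `r = 1`, `d j = 0` for `2 ≤ j ≤ N`, and
`d (N+1) = n`. -/
theorem degree_vectors_N_gt2 (N n : ℕ) (hN : 3 ≤ N) :
    (∀ d : ℕ → ℕ,
      (∑ j ∈ Finset.Icc 1 (N + 1), d j) = N * n + 1 →
      (∑ j ∈ Finset.Icc 1 (N + 1), j * d j) = 2 * (N * n) →
        ((d 1 = (N - 1) * n + 1 →
            1 ≤ n ∧ (∀ j, 2 ≤ j → j ≤ N - 1 → d j = 0) ∧ d N = 1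
              ∧ d (N + 1) = n - 1)
          ∧ d 1 ≠ (N - 1) * n + 2))
    ∧ (∀ r : ℕ, 1 ≤ r → r ≤ N - 1 →
        ∀ d : ℕ → ℕ,
          (∑ j ∈ Finset.Icc 1 (N + 1), d j) = (N * n + r) + 1 →
          (∑ j ∈ Finset.Icc 1 (N + 1), j * d j) = 2 * (N * n + r) →
          d 1 = (N - 1) * n + r + 1 →
            r = 1 ∧ (∀ j, 2 ≤ j → j ≤ N → d j = 0) ∧ d (N + 1) = n) := by
  obtain ⟨m, rfl⟩ : ∃ m, N = m + 3 := ⟨N - 3, by omega⟩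
  have hsub : m + 3 - 1 = m + 2 := by omega
  rw [hsub]
  constructor
  · intro d hs1 hs2
    rw [sum_split_bot (m + 3 + 1) (by omega)] at hs1 hs2
    set A := ∑ j ∈ Finset.Icc 2 (m + 3 + 1), d j with hA_def
    set B := ∑ j ∈ Finset.Icc 2 (m + 3 + 1), j * d j with hB_def
    set E := ∑ j ∈ Finset.Icc 2 (m + 3 + 1), (m + 3 + 1 - j) * d j with hE_def
    have hcomb : E + B = (m + 3 + 1) * A := sum_comb (m + 3 + 1) d
    simp only [one_mul] at hs2
    constructor
    · -- case (a)
      intro hd1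
      rw [hd1] at hs1 hs2
      have f1 : (m + 2) * n + n = (m + 3) * n := by ring
      have f2 : 2 * ((m + 3) * n) = (m + 2) * n + (m + 3 + 1) * n := by ring
      have hA : A = n := by linarith
      have hB : B + 1 = (m + 3 + 1) * n := by linarith
      have hE : E = 1 := by
        rw [hA] at hcomb; omega
      have hzero : ∀ j, 2 ≤ j → j ≤ m + 2 → d j = 0 := by
        intro j h2 hle
        have hjmem : j ∈ Finset.Icc 2 (m + 3 + 1) := by
          simp only [Finset.mem_Icc]; omega
        have hsingle : (m + 3 + 1 - j) * d j ≤ E :=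
          Finset.single_le_sum (f := fun j => (m + 3 + 1 - j) * d j)
            (fun i _ => Nat.zero_le _) hjmem
        have h2' : 2 ≤ m + 3 + 1 - j := by omega
        have h2dj : 2 * d j ≤ (m + 3 + 1 - j) * d j := Nat.mul_le_mul_right _ h2'
        omega
      have hEsplit : E = (∑ j ∈ Finset.Icc 2 (m + 3), (m + 3 + 1 - j) * d j)
          + (m + 3 + 1 - (m + 3 + 1)) * d (m + 3 + 1) :=
        Finset.sum_Icc_succ_top (by omega) _
      have hmid : (∑ j ∈ Finset.Icc 2 (m + 3), (m + 3 + 1 - j) * d j)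
          = (m + 3 + 1 - (m + 3)) * d (m + 3) := by
        refine Finset.sum_eq_single_of_mem _ (by simp only [Finset.mem_Icc]; omega) ?_
        intro b hb hne
        have hb' := Finset.mem_Icc.mp hb
        have : d b = 0 := hzero b hb'.1 (by omega)
        simp [this]
      have hdN : d (m + 3) = 1 := by
        rw [hmid] at hEsplit
        simp only [Nat.sub_self, zero_mul, add_zero] at hEsplit
        have : m + 3 + 1 - (m + 3) = 1 := by omega
        rw [this, one_mul] at hEsplit
        omega
      have hAsplit : A = (∑ j ∈ Finset.Icc 2 (m + 3), d j) + d (m + 3 + 1) :=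
        Finset.sum_Icc_succ_top (by omega) _
      have hAmid : (∑ j ∈ Finset.Icc 2 (m + 3), d j) = d (m + 3) := by
        refine Finset.sum_eq_single_of_mem _ (by simp only [Finset.mem_Icc]; omega) ?_
        intro b hb hne
        have hb' := Finset.mem_Icc.mp hb
        exact hzero b hb'.1 (by omega)
      rw [hAmid, hdN, hA] at hAsplit
      refine ⟨by omega, hzero, hdN, by omega⟩
    · -- case (b)
      intro hd1
      rw [hd1] at hs1 hs2
      rcases n with _ | k
      · simp only [Nat.mul_zero, Nat.add_zero] at hs1 hs2
        omega
      · have f1 : (m + 2) * (k + 1) + (k + 1) = (m + 3) * (k + 1) := by ring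
        have f2 : 2 * ((m + 3) * (k + 1)) = (m + 2) * (k + 1) + (m + 3 + 1) * (k + 1) := by
          ring
        have f3 : (m + 3 + 1) * (k + 1) = (m + 3 + 1) * k + (m + 3 + 1) := by ring
        have hA : A = k := by linarith
        rw [hA] at hcomb
        linarith
  · -- case (c)
    intro r hr1 hr2 d hs1 hs2 hd1
    rw [sum_split_bot (m + 3 + 1) (by omega)] at hs1 hs2
    set A := ∑ j ∈ Finset.Icc 2 (m + 3 + 1), d j with hA_def
    set B := ∑ j ∈ Finset.Icc 2 (m + 3 + 1), j * d j with hB_def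
    set E := ∑ j ∈ Finset.Icc 2 (m + 3 + 1), (m + 3 + 1 - j) * d j with hE_def
    have hcomb : E + B = (m + 3 + 1) * A := sum_comb (m + 3 + 1) d
    simp only [one_mul] at hs2
    rw [hd1] at hs1 hs2
    have f1 : (m + 2) * n + n = (m + 3) * n := by ring
    have f2 : 2 * ((m + 3) * n + r) = (m + 2) * n + (m + 3 + 1) * n + 2 * r := by ring
    have hA : A = n := by linarith
    have hEr : E + r = 1 := by
      rw [hA] at hcomb
      linarith
    have hE : E = 0 := by omega
    have hr : r = 1 := by omega
    have hzero : ∀ j, 2 ≤ j → j ≤ m + 3 → d j = 0 := by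
      intro j h2 hle
      have hjmem : j ∈ Finset.Icc 2 (m + 3 + 1) := by
        simp only [Finset.mem_Icc]; omega
      have := (Finset.sum_eq_zero_iff.mp hE) j hjmem
      rcases Nat.mul_eq_zero.mp this with h | h
      · omega
      · exact h
    have hAsplit : A = (∑ j ∈ Finset.Icc 2 (m + 3), d j) + d (m + 3 + 1) :=
      Finset.sum_Icc_succ_top (by omega) _
    have hAmid : (∑ j ∈ Finset.Icc 2 (m + 3), d j) = 0 := by
      refine Finset.sum_eq_zero fun b hb => ?_
      have hb' := Finset.mem_Icc.mp hb
      exact hzero b hb'.1 hb'.2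
    rw [hAmid, hA] at hAsplit
    exact ⟨hr, hzero, by omega⟩
end
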